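/- arXiv:2409.18498 — 3 statements merged into one kernel-verified Lean document; each statement's English description precedes it below -/
import Mathlib

section
/- For any finite set of points P in ℝ^d and any parameter k, the optimal discrete k-means cost is at most four times the optimal geometric k-means cost: if opt minimizes ∑_{p∈P} dist(p, C)² over all C ⊂ ℝ^d with |C| = k, and OPT_disc minimizes the same over C ⊆ P with |C| = k, then ∑_{p∈P} dist(p, OPT_disc)² ≤ 4 · ∑_{p∈P} dist(p, opt)². -/
open Metric

/-- The optimal discrete k-means cost is at most four times the optimal geometric k-means cost. -/
theorem stmt_1 {d k : ℕ} (hk : 1 ≤ k)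
    (P : Finset (EuclideanSpace ℝ (Fin d))) (hP : P.Nonempty)
    (opt OPTdisc : Finset (EuclideanSpace ℝ (Fin d)))
    (hoptcard : opt.card = k)
    (hoptmin : ∀ C : Finset (EuclideanSpace ℝ (Fin d)), C.card = k →
      ∑ p ∈ P, (infDist p (↑opt : Set (EuclideanSpace ℝ (Fin d)))) ^ 2
        ≤ ∑ p ∈ P, (infDist p (↑C : Set (EuclideanSpace ℝ (Fin d)))) ^ 2)
    (hsub : OPTdisc ⊆ P) (hdcard : OPTdisc.card = k)
    (hdmin : ∀ C : Finset (EuclideanSpace ℝ (Fin d)), C ⊆ P → C.card = k →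
      ∑ p ∈ P, (infDist p (↑OPTdisc : Set (EuclideanSpace ℝ (Fin d)))) ^ 2
        ≤ ∑ p ∈ P, (infDist p (↑C : Set (EuclideanSpace ℝ (Fin d)))) ^ 2) :
    ∑ p ∈ P, (infDist p (↑OPTdisc : Set (EuclideanSpace ℝ (Fin d)))) ^ 2
      ≤ 4 * ∑ p ∈ P, (infDist p (↑opt : Set (EuclideanSpace ℝ (Fin d)))) ^ 2 := by
  classical
  have hopt_ne : opt.Nonempty := Finset.card_pos.mp (by omega)
  -- nearest point in P to any point
  choose g hgP hg using fun c : EuclideanSpace ℝ (Fin d) =>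
    P.exists_min_image (fun q => dist c q) hP
  set C' : Finset (EuclideanSpace ℝ (Fin d)) := opt.image g with hC'
  have hC'P : C' ⊆ P := by
    intro x hx
    rcases Finset.mem_image.mp hx with ⟨c, _, rfl⟩
    exact hgP c
  have hC'ne : C'.Nonempty := hopt_ne.image g
  have hC'card : C'.card ≤ k := le_trans (Finset.card_image_le) (le_of_eq hoptcard)
  have hkP : k ≤ P.card := hdcard ▸ Finset.card_le_card hsub
  obtain ⟨C, hC'C, hCP, hCcard⟩ := Finset.exists_subsuperset_card_eq hC'P hC'card hkP
  have key : ∀ p ∈ P, (infDist p (↑C : Set (EuclideanSpace ℝ (Fin d)))) ^ 2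
      ≤ 4 * (infDist p (↑opt : Set (EuclideanSpace ℝ (Fin d)))) ^ 2 := by
    intro p hp
    obtain ⟨c, hc, hdc⟩ := opt.finite_toSet.isCompact.exists_infDist_eq_dist
      (by exact_mod_cast hopt_ne.to_set) p
    have hc : c ∈ opt := by exact_mod_cast hc
    have h1 : infDist p (↑C : Set (EuclideanSpace ℝ (Fin d))) ≤ dist p (g c) := by
      apply infDist_le_dist_of_mem
      exact_mod_cast hC'C (Finset.mem_image_of_mem g hc)
    have h2 : dist p (g c) ≤ 2 * dist p c := by
      calc dist p (g c) ≤ dist p c + dist c (g c) := dist_triangle p c (g c)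
        _ ≤ dist p c + dist c p := by
            have := hg c p hp
            linarith
        _ = 2 * dist p c := by rw [dist_comm c p]; ring
    have h3 : infDist p (↑C : Set (EuclideanSpace ℝ (Fin d))) ≤ 2 * dist p c :=
      h1.trans h2
    have h4 := pow_le_pow_left₀ infDist_nonneg h3 2
    rw [hdc]
    nlinarith [h4]
  calc ∑ p ∈ P, (infDist p (↑OPTdisc : Set (EuclideanSpace ℝ (Fin d)))) ^ 2
      ≤ ∑ p ∈ P, (infDist p (↑C : Set (EuclideanSpace ℝ (Fin d)))) ^ 2 :=
        hdmin C hCP hCcard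
    _ ≤ ∑ p ∈ P, 4 * (infDist p (↑opt : Set (EuclideanSpace ℝ (Fin d)))) ^ 2 :=
        Finset.sum_le_sum key
    _ = 4 * ∑ p ∈ P, (infDist p (↑opt : Set (EuclideanSpace ℝ (Fin d)))) ^ 2 :=
        (Finset.mul_sum _ _ _).symm
end

section
/- Cross-product centers are a √2-approximation for projected k-median: let P be a finite multiset in ℝ^{d₁} × ℝ^{d₂}, let S_v, S_z be finite sets of k centers in the two factors, and suppose ∑_{t} dist(π_v(t), S_v) ≤ β · min over all k-center sets C_v ⊂ ℝ^{d₁} of ∑_t dist(π_v(t), C_v), and similarly for S_z with factor β. Then X = S_v × S_z (a set of k² centers) satisfies ∑_t dist(t, X) ≤ √2 · β · min over all k-center sets C ⊂ ℝ^{d₁+d₂} of ∑_t dist(t, C). -/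
open Metric

noncomputable def pairL2 {d₁ d₂ : ℕ} (a : EuclideanSpace ℝ (Fin d₁))
    (b : EuclideanSpace ℝ (Fin d₂)) :
    WithLp 2 (EuclideanSpace ℝ (Fin d₁) × EuclideanSpace ℝ (Fin d₂)) :=
  (WithLp.equiv 2 (EuclideanSpace ℝ (Fin d₁) × EuclideanSpace ℝ (Fin d₂))).symm (a, b)

noncomputable def projV {d₁ d₂ : ℕ}
    (t : WithLp 2 (EuclideanSpace ℝ (Fin d₁) × EuclideanSpace ℝ (Fin d₂))) :
    EuclideanSpace ℝ (Fin d₁) :=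
  ((WithLp.equiv 2 (EuclideanSpace ℝ (Fin d₁) × EuclideanSpace ℝ (Fin d₂))) t).1

noncomputable def projZ {d₁ d₂ : ℕ}
    (t : WithLp 2 (EuclideanSpace ℝ (Fin d₁) × EuclideanSpace ℝ (Fin d₂))) :
    EuclideanSpace ℝ (Fin d₂) :=
  ((WithLp.equiv 2 (EuclideanSpace ℝ (Fin d₁) × EuclideanSpace ℝ (Fin d₂))) t).2

/-!
For the ℓ² distance on a product, `d ≤ d_v + d_z ≤ √2 · d`. The first inequality, applied to the
pair of nearest centers, bounds the cost of `S_v × S_z` by the sum of the two projected costs. The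
second, applied to the nearest optimal center, shows that the coordinate projections of an
optimal `k`-center set `O` cost at most `√2` times the cost of `O` in total. These projections
have at most `k` points; padding them to exactly `k` points only lowers their cost, so the
`β`-approximation hypotheses compare `S_v`, `S_z` with them.
-/

noncomputable def kMedianCost {E : Type*} [PseudoMetricSpace E] (P : Multiset E) (C : Set E) :
    ℝ :=
  (P.map fun p => infDist p C).sum

section kMedianCost

variable {E : Type*} [PseudoMetricSpace E]

lemma kMedianCost_map {ι : Type*} (f : ι → E) (P : Multiset ι) (C : Set E) :
    kMedianCost (P.map f) C = (P.map fun t => infDist (f t) C).sum := by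
  simp only [kMedianCost, Multiset.map_map, Function.comp_def]

lemma kMedianCost_le_kMedianCost_of_subset (P : Multiset E) {C D : Set E} (hCD : C ⊆ D)
    (hC : C.Nonempty) :
    kMedianCost P D ≤ kMedianCost P C :=
  Multiset.sum_map_le_sum_map _ _ fun _ _ => infDist_le_infDist_of_subset hCD hC

lemma kMedianCost_le_mul_of_card_le {P : Multiset E} {k : ℕ} {β : ℝ} (hβ : 0 ≤ β)
    {S : Finset E} (hS : k ≤ S.card)
    (hopt : ∀ D : Finset E, D.card = k → kMedianCost P S ≤ β * kMedianCost P D)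
    {C : Finset E} (hC : C.Nonempty) (hCk : C.card ≤ k) :
    kMedianCost P S ≤ β * kMedianCost P C := by
  classical
  obtain ⟨D, hCD, -, hD⟩ := Finset.exists_subsuperset_card_eq Finset.subset_union_left hCk
    (hS.trans (Finset.card_le_card Finset.subset_union_right))
  calc kMedianCost P S ≤ β * kMedianCost P D := hopt D hD
    _ ≤ β * kMedianCost P C := by
      gcongr
      exact kMedianCost_le_kMedianCost_of_subset P (by exact_mod_cast hCD) (by exact_mod_cast hC)

end kMedianCost

section L2Product

variable {α β : Type*} [SeminormedAddCommGroup α] [SeminormedAddCommGroup β]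

namespace WithLp

lemma prod_dist_le_dist_fst_add_dist_snd (x y : WithLp 2 (α × β)) :
    dist x y ≤ dist x.fst y.fst + dist x.snd y.snd := by
  rw [prod_dist_eq_of_L2, Real.sqrt_le_left (by positivity)]
  nlinarith [dist_nonneg (x := x.fst) (y := y.fst), dist_nonneg (x := x.snd) (y := y.snd)]

lemma dist_fst_add_dist_snd_le_prod_dist (x y : WithLp 2 (α × β)) :
    dist x.fst y.fst + dist x.snd y.snd ≤ √2 * dist x y := by
  rw [prod_dist_eq_of_L2, ← Real.sqrt_mul zero_le_two,
    Real.le_sqrt (by positivity) (by positivity)]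
  exact add_sq_le

end WithLp

lemma infDist_image_toLp_prod_le {s : Set α} {t : Set β} (hs : IsCompact s) (ht : IsCompact t)
    (x : WithLp 2 (α × β)) :
    infDist x (WithLp.toLp 2 '' s ×ˢ t) ≤ infDist x.fst s + infDist x.snd t := by
  rcases s.eq_empty_or_nonempty with rfl | hs_ne
  · simp only [Set.empty_prod, Set.image_empty, infDist_empty, zero_add]
    exact infDist_nonneg
  rcases t.eq_empty_or_nonempty with rfl | ht_ne
  · simp only [Set.prod_empty, Set.image_empty, infDist_empty, add_zero]
    exact infDist_nonneg
  obtain ⟨a, ha, hxa⟩ := hs.exists_infDist_eq_dist hs_ne x.fst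
  obtain ⟨b, hb, hxb⟩ := ht.exists_infDist_eq_dist ht_ne x.snd
  calc infDist x (WithLp.toLp 2 '' s ×ˢ t) ≤ dist x (WithLp.toLp 2 (a, b)) :=
        infDist_le_dist_of_mem ⟨(a, b), ⟨ha, hb⟩, rfl⟩
    _ ≤ dist x.fst a + dist x.snd b := WithLp.prod_dist_le_dist_fst_add_dist_snd _ _
    _ = infDist x.fst s + infDist x.snd t := by rw [hxa, hxb]

lemma infDist_fst_image_add_infDist_snd_image_le {C : Set (WithLp 2 (α × β))} (hC : IsCompact C)
    (x : WithLp 2 (α × β)) :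
    infDist x.fst (WithLp.fst '' C) + infDist x.snd (WithLp.snd '' C) ≤ √2 * infDist x C := by
  rcases C.eq_empty_or_nonempty with rfl | hC_ne
  · simp only [Set.image_empty, infDist_empty, add_zero, mul_zero, le_refl]
  obtain ⟨c, hc, hxc⟩ := hC.exists_infDist_eq_dist hC_ne x
  calc infDist x.fst (WithLp.fst '' C) + infDist x.snd (WithLp.snd '' C)
      ≤ dist x.fst c.fst + dist x.snd c.snd :=
        add_le_add (infDist_le_dist_of_mem ⟨c, hc, rfl⟩)
          (infDist_le_dist_of_mem ⟨c, hc, rfl⟩)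
    _ ≤ √2 * dist x c := WithLp.dist_fst_add_dist_snd_le_prod_dist _ _
    _ = √2 * infDist x C := by rw [hxc]

lemma kMedianCost_image_toLp_prod_le (P : Multiset (WithLp 2 (α × β))) {s : Set α} {t : Set β}
    (hs : IsCompact s) (ht : IsCompact t) :
    kMedianCost P (WithLp.toLp 2 '' s ×ˢ t)
      ≤ kMedianCost (P.map WithLp.fst) s + kMedianCost (P.map WithLp.snd) t := by
  rw [kMedianCost_map, kMedianCost_map, ← Multiset.sum_map_add]
  exact Multiset.sum_map_le_sum_map _ _ fun x _ => infDist_image_toLp_prod_le hs ht x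

lemma kMedianCost_fst_image_add_kMedianCost_snd_image_le (P : Multiset (WithLp 2 (α × β)))
    {C : Set (WithLp 2 (α × β))} (hC : IsCompact C) :
    kMedianCost (P.map WithLp.fst) (WithLp.fst '' C)
        + kMedianCost (P.map WithLp.snd) (WithLp.snd '' C) ≤ √2 * kMedianCost P C := by
  rw [kMedianCost_map, kMedianCost_map, ← Multiset.sum_map_add, kMedianCost,
    ← Multiset.sum_map_mul_left]
  exact Multiset.sum_map_le_sum_map _ _ fun x _ =>
    infDist_fst_image_add_infDist_snd_image_le hC x

end L2Product

/-- Cross-product centers are a `√2·β` approximation for k-median. -/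
theorem stmt_9 {d₁ d₂ k : ℕ} (hk : 1 ≤ k) {β : ℝ} (hβ : 1 ≤ β)
    (P : Multiset (WithLp 2 (EuclideanSpace ℝ (Fin d₁) × EuclideanSpace ℝ (Fin d₂))))
    (Sv : Finset (EuclideanSpace ℝ (Fin d₁))) (Sz : Finset (EuclideanSpace ℝ (Fin d₂)))
    (hSv : Sv.card = k) (hSz : Sz.card = k)
    (hv : ∀ Cv : Finset (EuclideanSpace ℝ (Fin d₁)), Cv.card = k →
      (P.map (fun t => infDist (projV t) (↑Sv : Set (EuclideanSpace ℝ (Fin d₁))))).sum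
        ≤ β * (P.map (fun t => infDist (projV t) (↑Cv : Set (EuclideanSpace ℝ (Fin d₁))))).sum)
    (hz : ∀ Cz : Finset (EuclideanSpace ℝ (Fin d₂)), Cz.card = k →
      (P.map (fun t => infDist (projZ t) (↑Sz : Set (EuclideanSpace ℝ (Fin d₂))))).sum
        ≤ β * (P.map (fun t => infDist (projZ t) (↑Cz : Set (EuclideanSpace ℝ (Fin d₂))))).sum) :
    ∀ C : Finset (WithLp 2 (EuclideanSpace ℝ (Fin d₁) × EuclideanSpace ℝ (Fin d₂))),
      C.card = k →
      (P.map (fun t => infDist t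
          ((fun p : EuclideanSpace ℝ (Fin d₁) × EuclideanSpace ℝ (Fin d₂) => pairL2 p.1 p.2) ''
            ((↑Sv : Set _) ×ˢ (↑Sz : Set _))))).sum
        ≤ Real.sqrt 2 * β * (P.map (fun t => infDist t (↑C : Set _))).sum := by
  classical
  intro C hC
  have hβ₀ : 0 ≤ β := zero_le_one.trans hβ
  have hC_ne : C.Nonempty := Finset.card_pos.mp (by omega)
  have hSv_le := kMedianCost_le_mul_of_card_le (P := P.map WithLp.fst) hβ₀ hSv.ge
    (fun D hD => by rw [kMedianCost_map, kMedianCost_map]; exact hv D hD)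
    (hC_ne.image WithLp.fst) (Finset.card_image_le.trans hC.le)
  have hSz_le := kMedianCost_le_mul_of_card_le (P := P.map WithLp.snd) hβ₀ hSz.ge
    (fun D hD => by rw [kMedianCost_map, kMedianCost_map]; exact hz D hD)
    (hC_ne.image WithLp.snd) (Finset.card_image_le.trans hC.le)
  rw [Finset.coe_image] at hSv_le hSz_le
  change kMedianCost P (WithLp.toLp 2 '' (Sv ×ˢ Sz : Set _)) ≤ _
  have hsplit := mul_le_mul_of_nonneg_left
    (kMedianCost_fst_image_add_kMedianCost_snd_image_le P C.finite_toSet.isCompact) hβ₀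
  calc kMedianCost P (WithLp.toLp 2 '' (Sv ×ˢ Sz : Set _))
      ≤ kMedianCost (P.map WithLp.fst) Sv + kMedianCost (P.map WithLp.snd) Sz :=
        kMedianCost_image_toLp_prod_le P Sv.finite_toSet.isCompact Sz.finite_toSet.isCompact
    _ ≤ β * (√2 * kMedianCost P C) := by linarith
    _ = √2 * β * kMedianCost P C := by ring
end

section
/- Cross-product centers are a 1-approximation-preserving construction for projected k-means: let P be a finite multiset in ℝ^{d₁} × ℝ^{d₂}, and suppose S_v and S_z are β-approximate k-means solutions for the projected multisets π_v(P) and π_z(P) respectively (β ≥ 1). Then X = S_v × S_z satisfies ∑_t dist(t, X)² ≤ β · min over all k-center sets C ⊂ ℝ^{d₁+d₂} of ∑_t dist(t, C)². -/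
open Metric

lemma dist_sq_split {d₁ d₂ : ℕ}
    (t c : WithLp 2 (EuclideanSpace ℝ (Fin d₁) × EuclideanSpace ℝ (Fin d₂))) :
    dist t c ^ 2 = dist (projV t) (projV c) ^ 2 + dist (projZ t) (projZ c) ^ 2 := by
  rw [WithLp.prod_dist_eq_of_L2, Real.sq_sqrt (by positivity)]
  rfl

lemma infDist_sq_prod {d₁ d₂ : ℕ}
    (A : Finset (EuclideanSpace ℝ (Fin d₁))) (B : Finset (EuclideanSpace ℝ (Fin d₂)))
    (hA : A.Nonempty) (hB : B.Nonempty)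
    (t : WithLp 2 (EuclideanSpace ℝ (Fin d₁) × EuclideanSpace ℝ (Fin d₂))) :
    (infDist t ((fun p : EuclideanSpace ℝ (Fin d₁) × EuclideanSpace ℝ (Fin d₂) => pairL2 p.1 p.2) ''
        ((↑A : Set _) ×ˢ (↑B : Set _)))) ^ 2
      = infDist (projV t) (↑A : Set _) ^ 2 + infDist (projZ t) (↑B : Set _) ^ 2 := by
  set X := (fun p : EuclideanSpace ℝ (Fin d₁) × EuclideanSpace ℝ (Fin d₂) => pairL2 p.1 p.2) ''
      ((↑A : Set _) ×ˢ (↑B : Set _)) with hX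
  obtain ⟨a, ha, hda⟩ := (A.finite_toSet.isCompact).exists_infDist_eq_dist
    (by exact_mod_cast hA) (projV t)
  obtain ⟨b, hb, hdb⟩ := (B.finite_toSet.isCompact).exists_infDist_eq_dist
    (by exact_mod_cast hB) (projZ t)
  have hXfin : X.Finite := ((A.finite_toSet.prod B.finite_toSet).image _)
  have hXne : X.Nonempty := ⟨pairL2 a b, ⟨(a, b), ⟨ha, hb⟩, rfl⟩⟩
  obtain ⟨x, hx, hdx⟩ := hXfin.isCompact.exists_infDist_eq_dist hXne t
  apply le_antisymm
  · have h1 : infDist t X ≤ dist t (pairL2 a b) :=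
      infDist_le_dist_of_mem ⟨(a, b), ⟨ha, hb⟩, rfl⟩
    calc infDist t X ^ 2 ≤ dist t (pairL2 a b) ^ 2 := by
          exact pow_le_pow_left₀ (infDist_nonneg) h1 2
      _ = _ := by rw [dist_sq_split, hda, hdb]; rfl
  · obtain ⟨⟨a', b'⟩, ⟨ha', hb'⟩, rfl⟩ := hx
    have h1 : infDist (projV t) (↑A : Set _) ≤ dist (projV t) a' :=
      infDist_le_dist_of_mem ha'
    have h2 : infDist (projZ t) (↑B : Set _) ≤ dist (projZ t) b' :=
      infDist_le_dist_of_mem hb'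
    calc infDist (projV t) (↑A : Set _) ^ 2 + infDist (projZ t) (↑B : Set _) ^ 2
        ≤ dist (projV t) a' ^ 2 + dist (projZ t) b' ^ 2 := by
          gcongr <;> [exact infDist_nonneg; exact infDist_nonneg]
      _ = dist t (pairL2 a' b') ^ 2 := by rw [dist_sq_split]; rfl
      _ = infDist t X ^ 2 := by rw [hdx]

lemma infDist_sq_proj_le {d₁ d₂ : ℕ}
    [DecidableEq (EuclideanSpace ℝ (Fin d₁))] [DecidableEq (EuclideanSpace ℝ (Fin d₂))]
    (C : Finset (WithLp 2 (EuclideanSpace ℝ (Fin d₁) × EuclideanSpace ℝ (Fin d₂))))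
    (hC : C.Nonempty)
    (t : WithLp 2 (EuclideanSpace ℝ (Fin d₁) × EuclideanSpace ℝ (Fin d₂))) :
    infDist (projV t) (↑(C.image projV) : Set _) ^ 2
      + infDist (projZ t) (↑(C.image projZ) : Set _) ^ 2 ≤ infDist t (↑C : Set _) ^ 2 := by
  obtain ⟨c, hc, hdc⟩ := (C.finite_toSet.isCompact).exists_infDist_eq_dist
    (by exact_mod_cast hC) t
  have h1 : infDist (projV t) (↑(C.image projV) : Set _) ≤ dist (projV t) (projV c) :=
    infDist_le_dist_of_mem (by simpa using Finset.mem_image_of_mem projV hc)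
  have h2 : infDist (projZ t) (↑(C.image projZ) : Set _) ≤ dist (projZ t) (projZ c) :=
    infDist_le_dist_of_mem (by simpa using Finset.mem_image_of_mem projZ hc)
  calc _ ≤ dist (projV t) (projV c) ^ 2 + dist (projZ t) (projZ c) ^ 2 := by
        gcongr <;> [exact infDist_nonneg; exact infDist_nonneg]
    _ = dist t c ^ 2 := (dist_sq_split t c).symm
    _ = _ := by rw [hdc]

/-- Cross-product centers preserve the approximation factor `β` for k-means. -/
theorem stmt_10 {d₁ d₂ k : ℕ} (hk : 1 ≤ k) {β : ℝ} (hβ : 1 ≤ β)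
    (P : Multiset (WithLp 2 (EuclideanSpace ℝ (Fin d₁) × EuclideanSpace ℝ (Fin d₂))))
    (Sv : Finset (EuclideanSpace ℝ (Fin d₁))) (Sz : Finset (EuclideanSpace ℝ (Fin d₂)))
    (hSv : Sv.card = k) (hSz : Sz.card = k)
    (hv : ∀ Cv : Finset (EuclideanSpace ℝ (Fin d₁)), Cv.card = k →
      (P.map (fun t => (infDist (projV t) (↑Sv : Set (EuclideanSpace ℝ (Fin d₁)))) ^ 2)).sum
        ≤ β * (P.map (fun t =>
            (infDist (projV t) (↑Cv : Set (EuclideanSpace ℝ (Fin d₁)))) ^ 2)).sum)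
    (hz : ∀ Cz : Finset (EuclideanSpace ℝ (Fin d₂)), Cz.card = k →
      (P.map (fun t => (infDist (projZ t) (↑Sz : Set (EuclideanSpace ℝ (Fin d₂)))) ^ 2)).sum
        ≤ β * (P.map (fun t =>
            (infDist (projZ t) (↑Cz : Set (EuclideanSpace ℝ (Fin d₂)))) ^ 2)).sum) :
    ∀ C : Finset (WithLp 2 (EuclideanSpace ℝ (Fin d₁) × EuclideanSpace ℝ (Fin d₂))),
      C.card = k →
      (P.map (fun t => (infDist t
          ((fun p : EuclideanSpace ℝ (Fin d₁) × EuclideanSpace ℝ (Fin d₂) => pairL2 p.1 p.2) ''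
            ((↑Sv : Set _) ×ˢ (↑Sz : Set _)))) ^ 2)).sum
        ≤ β * (P.map (fun t => (infDist t (↑C : Set _)) ^ 2)).sum := by
  classical
  intro C hC
  have hCne : C.Nonempty := Finset.card_pos.mp (by omega)
  have hSvne : Sv.Nonempty := Finset.card_pos.mp (by omega)
  have hSzne : Sz.Nonempty := Finset.card_pos.mp (by omega)
  obtain ⟨Cv, hCv0, -, hCvcard⟩ := Finset.exists_subsuperset_card_eq
    (Finset.subset_union_left (s₁ := C.image projV) (s₂ := Sv))
    (Finset.card_image_le.trans hC.le)
    (hSv ▸ Finset.card_le_card Finset.subset_union_right)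
  obtain ⟨Cz, hCz0, -, hCzcard⟩ := Finset.exists_subsuperset_card_eq
    (Finset.subset_union_left (s₁ := C.image projZ) (s₂ := Sz))
    (Finset.card_image_le.trans hC.le)
    (hSz ▸ Finset.card_le_card Finset.subset_union_right)
  have hβ0 : (0:ℝ) ≤ β := by linarith
  calc (P.map (fun t => (infDist t
          ((fun p : EuclideanSpace ℝ (Fin d₁) × EuclideanSpace ℝ (Fin d₂) => pairL2 p.1 p.2) ''
            ((↑Sv : Set _) ×ˢ (↑Sz : Set _)))) ^ 2)).sum
      = (P.map (fun t => infDist (projV t) (↑Sv : Set _) ^ 2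
          + infDist (projZ t) (↑Sz : Set _) ^ 2)).sum := by
        rw [Multiset.map_congr rfl fun t _ => infDist_sq_prod Sv Sz hSvne hSzne t]
    _ = (P.map (fun t => infDist (projV t) (↑Sv : Set _) ^ 2)).sum
          + (P.map (fun t => infDist (projZ t) (↑Sz : Set _) ^ 2)).sum := by
        rw [← Multiset.sum_map_add]
    _ ≤ β * (P.map (fun t => infDist (projV t) (↑Cv : Set _) ^ 2)).sum
          + β * (P.map (fun t => infDist (projZ t) (↑Cz : Set _) ^ 2)).sum :=
        add_le_add (hv Cv hCvcard) (hz Cz hCzcard)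
    _ = β * (P.map (fun t => infDist (projV t) (↑Cv : Set _) ^ 2
          + infDist (projZ t) (↑Cz : Set _) ^ 2)).sum := by
        rw [Multiset.sum_map_add, mul_add]
    _ ≤ β * (P.map (fun t => (infDist t (↑C : Set _)) ^ 2)).sum := by
        apply mul_le_mul_of_nonneg_left ?_ hβ0
        apply Multiset.sum_map_le_sum_map
        intro t _
        have hv1 : infDist (projV t) (↑Cv : Set _) ≤ infDist (projV t) (↑(C.image projV) : Set _) :=
          infDist_le_infDist_of_subset (Finset.coe_subset.mpr hCv0)
            (by exact_mod_cast hCne.image projV)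
        have hz1 : infDist (projZ t) (↑Cz : Set _) ≤ infDist (projZ t) (↑(C.image projZ) : Set _) :=
          infDist_le_infDist_of_subset (Finset.coe_subset.mpr hCz0)
            (by exact_mod_cast hCne.image projZ)
        have := infDist_sq_proj_le C hCne t
        have hv2 : infDist (projV t) (↑Cv : Set _) ^ 2
            ≤ infDist (projV t) (↑(C.image projV) : Set _) ^ 2 := by
          gcongr; exact infDist_nonneg
        have hz2 : infDist (projZ t) (↑Cz : Set _) ^ 2
            ≤ infDist (projZ t) (↑(C.image projZ) : Set _) ^ 2 := by
          gcongr; exact infDist_nonneg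
        linarith
end
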